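/- Every bounded set of the form {x ∈ ℝ^k : A x ≤ b} (an H-polytope) equals the convex hull of its extreme points, i.e., it has a representation as a V-polytope generated by its vertices. -/

import Mathlib

/-!
A vertex `x` of `P = {x | ∀ i, f i x ≤ b i}` is determined by the set of constraints that are
tight at `x`: if `d` is annihilated by all of them, then `x ± c • d` stays in `P` for small `c`,
so `d = 0` by extremality. With finitely many constraints there are therefore finitely many
vertices, and Krein–Milman for the compact convex set `P` shows that `P` is the closure of the
convex hull of its vertices, which is already closed.
-/

open Filter Topology

theorem eq_zero_of_mem_extremePoints_of_eventually_add_smul_mem {E : Type*} [AddCommGroup E]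
    [Module ℝ E] {s : Set E} {x d : E} (hx : x ∈ s.extremePoints ℝ)
    (hd : ∀ᶠ c in 𝓝 (0 : ℝ), x + c • d ∈ s) : d = 0 := by
  have hd' : ∀ᶠ c in 𝓝 (0 : ℝ), x + c • d ∈ s ∧ x + (-c) • d ∈ s :=
    hd.and ((continuous_neg.tendsto' 0 0 neg_zero).eventually hd)
  obtain ⟨c, ⟨hc₁, hc₂⟩, hc⟩ :=
    ((hd'.filter_mono nhdsWithin_le_nhds).and (self_mem_nhdsWithin (s := Set.Ioi 0))).exists
  have hseg : x ∈ openSegment ℝ (x + c • d) (x + (-c) • d) :=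
    ⟨1 / 2, 1 / 2, by norm_num, by norm_num, by norm_num, by module⟩
  have hcd : c • d = 0 := add_eq_left.mp (hx.2 hc₁ hc₂ hseg)
  exact (smul_eq_zero.mp hcd).resolve_left (ne_of_gt hc)

section Polyhedron

variable {E ι : Type*} [AddCommGroup E] [Module ℝ E] (f : ι → E →ₗ[ℝ] ℝ) (b : ι → ℝ)

theorem eventually_add_smul_mem_setOf_forall_le [Finite ι] {x d : E} (hx : ∀ i, f i x ≤ b i)
    (hd : ∀ i, f i x = b i → f i d = 0) :
    ∀ᶠ c in 𝓝 (0 : ℝ), x + c • d ∈ {y | ∀ i, f i y ≤ b i} := by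
  refine eventually_all.mpr fun i => ?_
  simp only [map_add, map_smul, smul_eq_mul]
  rcases (hx i).eq_or_lt with htight | hslack
  · exact .of_forall fun c => by simp [htight, hd i htight]
  · have hcont : Continuous fun c : ℝ => f i x + c * f i d := by fun_prop
    exact (hcont.continuousAt.eventually_lt continuousAt_const (by simpa using hslack)).mono
      fun _ => le_of_lt

theorem injOn_setOf_tight_extremePoints [Finite ι] :
    Set.InjOn (fun x => {i | f i x = b i}) ({x | ∀ i, f i x ≤ b i}.extremePoints ℝ) := by
  intro x hx y _ hxy
  have hd : ∀ i, f i x = b i → f i (y - x) = 0 := by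
    intro i hxi
    have hyi : f i y = b i := (Set.ext_iff.mp hxy i).mp hxi
    rw [map_sub, hyi, hxi, sub_self]
  have hyx := eq_zero_of_mem_extremePoints_of_eventually_add_smul_mem hx
    (eventually_add_smul_mem_setOf_forall_le f b hx.1 hd)
  exact (sub_eq_zero.mp hyx).symm

theorem finite_extremePoints_setOf_forall_le [Finite ι] :
    ({x | ∀ i, f i x ≤ b i}.extremePoints ℝ).Finite :=
  (Set.toFinite _).of_finite_image (injOn_setOf_tight_extremePoints f b)

theorem convex_setOf_forall_le : Convex ℝ {x | ∀ i, f i x ≤ b i} := by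
  rw [Set.ofPred_forall]
  exact convex_iInter fun i => convex_halfSpace_le (f i).isLinear (b i)

theorem isClosed_setOf_forall_le [TopologicalSpace E] [IsTopologicalAddGroup E]
    [ContinuousSMul ℝ E] [T2Space E] [FiniteDimensional ℝ E] :
    IsClosed {x | ∀ i, f i x ≤ b i} := by
  rw [Set.ofPred_forall]
  exact isClosed_iInter fun i =>
    isClosed_le (f i).continuous_of_finiteDimensional continuous_const

end Polyhedron

theorem setOf_forall_le_eq_convexHull_extremePoints {E ι : Type*} [NormedAddCommGroup E]
    [NormedSpace ℝ E] [FiniteDimensional ℝ E] [Finite ι] (f : ι → E →ₗ[ℝ] ℝ) (b : ι → ℝ)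
    (hbdd : Bornology.IsBounded {x | ∀ i, f i x ≤ b i}) :
    {x | ∀ i, f i x ≤ b i} = convexHull ℝ ({x | ∀ i, f i x ≤ b i}.extremePoints ℝ) := by
  have hcomp := Metric.isCompact_of_isClosed_isBounded (isClosed_setOf_forall_le f b) hbdd
  rw [← ((finite_extremePoints_setOf_forall_le f b).isClosed_convexHull ℝ).closure_eq,
    closure_convexHull_extremePoints hcomp (convex_setOf_forall_le f b)]

/-- Every bounded H-polytope `{x : A x ≤ b}` in `ℝ^k` equals the convex hull of its
(finitely many) extreme points, i.e. it is a V-polytope generated by its vertices. -/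
theorem hPolytope_eq_convexHull_vertices (m k : ℕ)
    (A : Matrix (Fin m) (Fin k) ℝ) (b : Fin m → ℝ)
    (P : Set (Fin k → ℝ)) (hP : P = {x : Fin k → ℝ | ∀ i, A.mulVec x i ≤ b i})
    (hbdd : Bornology.IsBounded P) :
    (P.extremePoints ℝ).Finite ∧ P = convexHull ℝ (P.extremePoints ℝ) := by
  let f : Fin m → (Fin k → ℝ) →ₗ[ℝ] ℝ := fun i => LinearMap.proj i ∘ₗ A.mulVecLin
  have hPf : P = {x | ∀ i, f i x ≤ b i} := hP
  subst hPf
  exact ⟨finite_extremePoints_setOf_forall_le f b,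
    setOf_forall_le_eq_convexHull_extremePoints f b hbdd⟩
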